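/- For every a₀ > 0, every c > 0, every G̃ > 0 and every integer M ≥ 2 there exist ε₀ ∈ (0,1) and D > 0 such that the following holds. Let Ĵ : ℤ → ℂ satisfy |Ĵ(q)| ≥ c for all q ∉ {1, −1}, for each 2 ≤ n ≤ M let g_n : ℤ^n → ℂ satisfy |g_n| ≤ G̃ everywhere, and let P : ℤ → ℂ satisfy P(−q) = conj(P(q)) for all q ∈ ℤ, |P(q)| ≤ a₀/q² for all q ≠ 0, sup_{q∈ℤ} |P(q)| = |P(1)| =: ε ≤ ε₀, and the harmonic-balance equation Ĵ(q)·P(q) = Σ_{n=2}^{M} S(g_n,n,P)(q) for all q ∉ {1, −1}. Then |P(q)| ≤ D·ε³ for every q ∈ ℤ with |q| ≥ 3. -/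

import Mathlib

/-- For `q : ℤ` and `k = (k₁, …, k_m) : Fin m → ℤ`, `diffs q k i` is the `i`-th successive
difference in the chain `q, k₁, k₂, …, k_m, 0`; i.e. `diffs q k 0 = q - k₁`,
`diffs q k i = kᵢ - k_{i+1}` for `1 ≤ i ≤ m - 1`, and `diffs q k m = k_m`. -/
def diffs (q : ℤ) {m : ℕ} (k : Fin m → ℤ) (i : ℕ) : ℤ :=
  (q :: (List.ofFn k ++ [0])).getD i 0 - (q :: (List.ofFn k ++ [0])).getD (i + 1) 0

/-- `Sg n g P q = Σ_{k₁,…,k_{n-1} ∈ ℤ} g(q,k₁,…,k_{n-1}) · P(q-k₁)·P(k₁-k₂)⋯P(k_{n-1})`,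
the convolution-type multiple series with kernel `g`. -/
noncomputable def Sg (n : ℕ) (g : (Fin n → ℤ) → ℂ) (P : ℤ → ℂ) (q : ℤ) : ℂ :=
  ∑' k : Fin (n - 1) → ℤ,
    g (fun i : Fin n => (q :: List.ofFn k).getD (i : ℕ) 0) *
      ∏ i ∈ Finset.range n, P (diffs q k i)

/-!
Write `E = ‖P 1‖ = sup ‖P‖`, let `B` bound `‖P‖` off `{-1, 0, 1}` and `S` bound its mass there.
Each `Sg n` at `q` is dominated by `G` times the `n`-fold convolution power of `‖P‖`, and a chain
`q → k₁ → ⋯ → 0` either makes all its `n ≥ |q|` steps inside `{-1, 0, 1}` (weight `≤ E ^ n`)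
or makes a step outside it (weight `≤ B`), while summing over any other step costs a factor
`≤ 3 E + S`. The balance equation, with `‖J q‖ ≥ c`, therefore gives
`‖P q‖ ≤ K (E ^ p + B (3 E + S))` for `|q| ≥ p ≥ 2`. The decay `‖P d‖ ≤ a₀ / d²` gives
`S ≤ 2 N B + 4 a₀ / (N + 1)` for every `N`. Taking for `B` the supremum of `‖P‖` off
`{-1, 0, 1}` and `p = 2`, a fixed `N` makes `K (3 E + S) ≤ 1 / 2` once `E` is small, so the
`B`-term is absorbed and `B ≤ 2 K E²`. Then `N ≈ 1 / E` gives `S = O(E)`, and `p = 3` gives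
`‖P q‖ = O(E³)`.
-/

open scoped ENNReal

lemma diffs_cons_zero (q k₀ : ℤ) {m : ℕ} (k : Fin m → ℤ) :
    diffs q (Fin.cons k₀ k) 0 = q - k₀ := by
  simp [diffs, List.ofFn_succ]

lemma diffs_cons_succ (q k₀ : ℤ) {m : ℕ} (k : Fin m → ℤ) (i : ℕ) :
    diffs q (Fin.cons k₀ k) (i + 1) = diffs k₀ k i := by
  simp [diffs, List.ofFn_succ]

/-- `iterConv m n` is the `(n + 1)`-fold convolution power `m ∗ ⋯ ∗ m` on `ℤ`. -/
noncomputable def iterConv (m : ℤ → ℝ≥0∞) : ℕ → ℤ → ℝ≥0∞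
  | 0, q => m q
  | n + 1, q => ∑' k : ℤ, m (q - k) * iterConv m n k

lemma tsum_prod_diffs_eq_iterConv (m : ℤ → ℝ≥0∞) :
    ∀ (n : ℕ) (q : ℤ),
      ∑' k : Fin n → ℤ, ∏ i ∈ Finset.range (n + 1), m (diffs q k i) = iterConv m n q
  | 0, q => by
    rw [tsum_eq_single (fun _ => 0) fun k hk => absurd (Subsingleton.elim _ _) hk]
    simp [iterConv, diffs]
  | n + 1, q => by
    have hcons (k₀ : ℤ) (k : Fin n → ℤ) :
        ∏ i ∈ Finset.range (n + 2), m (diffs q (Fin.cons k₀ k) i) =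
          m (q - k₀) * ∏ i ∈ Finset.range (n + 1), m (diffs k₀ k i) := by
      rw [Finset.prod_range_succ']
      simp only [diffs_cons_zero, diffs_cons_succ]
      ring
    rw [← (Fin.consEquiv fun _ : Fin (n + 1) => ℤ).tsum_eq, ENNReal.tsum_prod']
    simp only [Fin.consEquiv, Equiv.coe_fn_mk, hcons, ENNReal.tsum_mul_left,
      tsum_prod_diffs_eq_iterConv m n, iterConv]

lemma enorm_Sg_succ_le {n : ℕ} {g : (Fin (n + 1) → ℤ) → ℂ} {G : ℝ≥0∞} (hg : ∀ v, ‖g v‖ₑ ≤ G)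
    (P : ℤ → ℂ) (q : ℤ) : ‖Sg (n + 1) g P q‖ₑ ≤ G * iterConv (fun d => ‖P d‖ₑ) n q := by
  rw [← tsum_prod_diffs_eq_iterConv, ← ENNReal.tsum_mul_left]
  refine enorm_tsum_le_tsum_enorm.trans (ENNReal.tsum_le_tsum fun k => ?_)
  rw [enorm_mul]
  exact mul_le_mul' (hg _) (by simp [enorm_eq_nnnorm, nnnorm_prod])

noncomputable def tailSum (m : ℤ → ℝ≥0∞) : ℝ≥0∞ := ∑' d : ℤ, if 2 ≤ |d| then m d else 0

section ConvolutionBounds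

variable {m : ℤ → ℝ≥0∞} {E B : ℝ≥0∞}

lemma le_ite_add (hE : ∀ d, m d ≤ E) (hB : ∀ d, 2 ≤ |d| → m d ≤ B) (d : ℤ) :
    m d ≤ (if |d| ≤ 1 then E else 0) + B := by
  split_ifs with hd
  · exact le_add_right (hE d)
  · exact (hB d (by omega)).trans le_add_self

lemma tsum_comp_sub_le (hE : ∀ d, m d ≤ E) (q : ℤ) : ∑' k, m (q - k) ≤ 3 * E + tailSum m := by
  have hsplit (d : ℤ) :
      m d ≤ (if d ∈ Finset.Icc (-1) 1 then E else 0) + if 2 ≤ |d| then m d else 0 := by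
    by_cases hd : 2 ≤ |d|
    · simp [hd]
    · rw [if_pos (by rw [Finset.mem_Icc, ← abs_le]; omega), if_neg hd, add_zero]
      exact hE d
  calc ∑' k, m (q - k) = ∑' d, m d := (Equiv.subLeft q).tsum_eq m
    _ ≤ ∑' d, ((if d ∈ Finset.Icc (-1) 1 then E else 0) + if 2 ≤ |d| then m d else 0) :=
      ENNReal.tsum_le_tsum hsplit
    _ = 3 * E + tailSum m := by
      rw [ENNReal.tsum_add, tsum_eq_sum (s := Finset.Icc (-1) 1) (fun d hd => if_neg hd),
        Finset.sum_ite_mem, Finset.inter_self, Finset.sum_const, Int.card_Icc, nsmul_eq_mul,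
        tailSum]
      rfl

lemma tsum_mul_ite_le (hE : ∀ d, m d ≤ E) (hB : ∀ d, 2 ≤ |d| → m d ≤ B) (r : ℕ) (x : ℝ≥0∞)
    (q : ℤ) :
    ∑' k, m (q - k) * (if |k| ≤ r then x else 0) ≤
      (2 * r + 1) * x * ((if |q| ≤ r + 1 then E else 0) + B) := by
  have hterm (k : ℤ) :
      m (q - k) * (if |k| ≤ r then x else 0) ≤ x * ((if |q| ≤ r + 1 then E else 0) + B) := by
    split_ifs with hk hq
    · rw [mul_comm]
      gcongr
      exact le_add_right (hE _)
    · rw [mul_comm, zero_add]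
      gcongr
      exact hB _ (by have := abs_sub_abs_le_abs_sub q k; omega)
    all_goals simp
  rw [tsum_eq_sum (s := Finset.Icc (-(r : ℤ)) r) fun k hk => by
    rw [Finset.mem_Icc, ← abs_le] at hk; simp [hk]]
  refine (Finset.sum_le_sum fun k _ => hterm k).trans ?_
  rw [Finset.sum_const, Int.card_Icc, nsmul_eq_mul, mul_assoc]
  gcongr
  norm_cast
  omega

lemma tsum_mul_le_of_le_ite_add (hE : ∀ d, m d ≤ E) (hB : ∀ d, 2 ≤ |d| → m d ≤ B)
    {f : ℤ → ℝ≥0∞} {r : ℕ} {x y : ℝ≥0∞} (hf : ∀ k, f k ≤ (if |k| ≤ r then x else 0) + y)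
    (q : ℤ) :
    ∑' k, m (q - k) * f k ≤
      (2 * r + 1) * x * ((if |q| ≤ r + 1 then E else 0) + B) + y * (3 * E + tailSum m) :=
  calc ∑' k, m (q - k) * f k
      ≤ ∑' k, (m (q - k) * (if |k| ≤ r then x else 0) + y * m (q - k)) :=
        ENNReal.tsum_le_tsum fun k => (mul_le_mul_right (hf k) _).trans_eq (by ring)
    _ = ∑' k, m (q - k) * (if |k| ≤ r then x else 0) + y * ∑' k, m (q - k) := by
        rw [ENNReal.tsum_add, ENNReal.tsum_mul_left]
    _ ≤ _ := add_le_add (tsum_mul_ite_le hE hB r x q) (mul_le_mul_right (tsum_comp_sub_le hE q) y)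

lemma iterConv_succ_le (hE : ∀ d, m d ≤ E) (hB : ∀ d, 2 ≤ |d| → m d ≤ B) {S : ℝ≥0∞}
    (hS : tailSum m ≤ S) {n : ℕ} {a : ℝ≥0∞}
    (hn : ∀ k, iterConv m n k ≤
      a * ((if |k| ≤ n + 1 then E ^ (n + 1) else 0) + (n + 1) * B * (3 * E + S) ^ n))
    (q : ℤ) :
    iterConv m (n + 1) q ≤ (2 * n + 5) * a *
      ((if |q| ≤ (n + 1 : ℕ) + 1 then E ^ (n + 1 + 1) else 0) +
        ((n + 1 : ℕ) + 1) * B * (3 * E + S) ^ (n + 1)) := by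
  set X := 3 * E + S
  set t : ℝ≥0∞ := if |q| ≤ ((n + 1 : ℕ) : ℤ) + 1 then E else 0
  have hn' (k : ℤ) : iterConv m n k ≤
      (if |k| ≤ (n + 1 : ℕ) then a * E ^ (n + 1) else 0) + a * (n + 1) * B * X ^ n := by
    refine (hn k).trans_eq ?_
    push_cast
    split_ifs <;> ring
  have hEX : E ≤ X := le_add_right (le_mul_of_one_le_left' (by norm_num))
  have ht : (if |q| ≤ (n + 1 : ℕ) + 1 then E ^ (n + 1 + 1) else 0) = E ^ (n + 1) * t := by
    simp only [t]
    split_ifs <;> ring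
  calc iterConv m (n + 1) q
      ≤ (2 * n + 3) * (a * E ^ (n + 1)) * (t + B) +
          a * (n + 1) * B * X ^ n * (3 * E + tailSum m) := by
        refine (tsum_mul_le_of_le_ite_add hE hB hn' q).trans_eq ?_
        rw [show ((n + 1 : ℕ) : ℝ≥0∞) = n + 1 from Nat.cast_succ n]
        ring
    _ ≤ (2 * n + 3) * (a * E ^ (n + 1)) * (t + B) + a * (n + 1) * B * X ^ n * X := by
        simp only [X]
        gcongr
    _ = (2 * n + 3) * a * (E ^ (n + 1) * t) +
          a * B * ((2 * n + 3) * E ^ (n + 1) + (n + 1) * X ^ (n + 1)) := by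
        ring
    _ ≤ (2 * n + 5) * a * (E ^ (n + 1) * t) +
          a * B * ((2 * n + 5) * (n + 2) * X ^ (n + 1)) := by
        gcongr ?_ * a * _ + _ * ?_
        · gcongr
          norm_num
        · calc (2 * n + 3) * E ^ (n + 1) + (n + 1) * X ^ (n + 1)
              ≤ (2 * n + 3) * X ^ (n + 1) + (n + 1) * X ^ (n + 1) := by gcongr
            _ = (3 * n + 4) * X ^ (n + 1) := by ring
            _ ≤ _ := by
              gcongr
              exact_mod_cast (by nlinarith : 3 * n + 4 ≤ (2 * n + 5) * (n + 2))
    _ = _ := by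
        rw [ht]
        push_cast
        ring

lemma iterConv_le (hE : ∀ d, m d ≤ E) (hB : ∀ d, 2 ≤ |d| → m d ≤ B) {S : ℝ≥0∞}
    (hS : tailSum m ≤ S) :
    ∀ (n : ℕ) (q : ℤ), iterConv m n q ≤ (2 * n + 3) ^ (n + 1) *
      ((if |q| ≤ n + 1 then E ^ (n + 1) else 0) + (n + 1) * B * (3 * E + S) ^ n)
  | 0, q => by
    refine (le_ite_add hE hB q).trans ?_
    simp only [CharP.cast_eq_zero, zero_add, pow_one, one_mul, pow_zero, mul_one]
    exact le_mul_of_one_le_left' (by norm_num)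
  | n + 1, q => by
    refine (iterConv_succ_le hE hB hS (iterConv_le hE hB hS n) q).trans (mul_le_mul_left ?_ _)
    exact_mod_cast calc (2 * n + 5) * (2 * n + 3) ^ (n + 1)
        ≤ (2 * n + 5) * (2 * n + 5) ^ (n + 1) := by gcongr; omega
      _ = (2 * (n + 1) + 3) ^ (n + 1 + 1) := by ring

end ConvolutionBounds

lemma enorm_Sg_le {n : ℕ} (hn : 2 ≤ n) {g : (Fin n → ℤ) → ℂ} {G : ℝ≥0∞} (hg : ∀ v, ‖g v‖ₑ ≤ G)
    {P : ℤ → ℂ} {E B S : ℝ≥0∞} (hE : ∀ d, ‖P d‖ₑ ≤ E) (hB : ∀ d : ℤ, 2 ≤ |d| → ‖P d‖ₑ ≤ B)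
    (hS : tailSum (fun d => ‖P d‖ₑ) ≤ S) (hES : 3 * E + S ≤ 1) {p : ℕ} {q : ℤ} (hq : p ≤ |q|) :
    ‖Sg n g P q‖ₑ ≤ G * (2 * n + 1) ^ n * (E ^ p + n * B * (3 * E + S)) := by
  obtain ⟨j, rfl⟩ : ∃ j, n = j + 1 := ⟨n - 1, by omega⟩
  have hE1 : E ≤ 1 := (le_mul_of_one_le_left' (by norm_num)).trans (le_self_add.trans hES)
  have hcentre : (if |q| ≤ j + 1 then E ^ (j + 1) else 0) ≤ E ^ p := by
    split_ifs with hqj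
    · exact pow_le_pow_right_of_le_one' hE1 (by omega)
    · exact zero_le
  calc ‖Sg (j + 1) g P q‖ₑ ≤ G * iterConv (fun d => ‖P d‖ₑ) j q := enorm_Sg_succ_le hg P q
    _ ≤ G * ((2 * j + 3) ^ (j + 1) *
          ((if |q| ≤ j + 1 then E ^ (j + 1) else 0) + (j + 1) * B * (3 * E + S) ^ j)) := by
        gcongr
        exact iterConv_le hE hB hS j q
    _ ≤ G * ((2 * j + 3) ^ (j + 1) * (E ^ p + (j + 1) * B * (3 * E + S))) := by
        gcongr
        exact pow_le_of_le_one zero_le hES (by omega)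
    _ = _ := by push_cast; ring

lemma norm_Sg_le {n : ℕ} (hn : 2 ≤ n) {g : (Fin n → ℤ) → ℂ} {G : ℝ} (hg : ∀ v, ‖g v‖ ≤ G)
    {P : ℤ → ℂ} {E B S : ℝ} (hE : ∀ d, ‖P d‖ ≤ E) (hB : ∀ d : ℤ, 2 ≤ |d| → ‖P d‖ ≤ B)
    (hS : tailSum (fun d => ‖P d‖ₑ) ≤ ENNReal.ofReal S) (hS0 : 0 ≤ S) (hES : 3 * E + S ≤ 1)
    {p : ℕ} {q : ℤ} (hq : p ≤ |q|) :
    ‖Sg n g P q‖ ≤ G * (2 * n + 1) ^ n * (E ^ p + n * B * (3 * E + S)) := by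
  have hG0 : 0 ≤ G := (norm_nonneg _).trans (hg 0)
  have hE0 : 0 ≤ E := (norm_nonneg _).trans (hE 0)
  have hB0 : 0 ≤ B := (norm_nonneg _).trans (hB 2 (by norm_num))
  have hES' : 3 * ENNReal.ofReal E + ENNReal.ofReal S ≤ 1 := by
    rw [← ENNReal.ofReal_ofNat 3, ← ENNReal.ofReal_mul (by norm_num),
      ← ENNReal.ofReal_add (by positivity) hS0]
    exact ENNReal.ofReal_le_one.2 hES
  have h := enorm_Sg_le hn (fun v => ofReal_norm (g v) ▸ ENNReal.ofReal_le_ofReal (hg v))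
    (fun d => ofReal_norm (P d) ▸ ENNReal.ofReal_le_ofReal (hE d))
    (fun d hd => ofReal_norm (P d) ▸ ENNReal.ofReal_le_ofReal (hB d hd)) hS hES' hq
  have hcast : ENNReal.ofReal (G * (2 * n + 1) ^ n * (E ^ p + n * B * (3 * E + S))) =
      ENNReal.ofReal G * (2 * n + 1) ^ n * (ENNReal.ofReal E ^ p +
        n * ENNReal.ofReal B * (3 * ENNReal.ofReal E + ENNReal.ofReal S)) := by
    simp (disch := positivity) only [ENNReal.ofReal_mul, ENNReal.ofReal_add, ENNReal.ofReal_pow,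
      ENNReal.ofReal_natCast, ENNReal.ofReal_ofNat, ENNReal.ofReal_one]
  rw [← ofReal_norm, ← hcast] at h
  exact (ENNReal.ofReal_le_ofReal_iff (by positivity)).1 h

/-- The estimate on the modes `|q| ≥ p ≥ 2` that the harmonic-balance equation yields, in terms
of a bound `B` on `f` off `{-1, 0, 1}` and a bound `S` on its mass there. -/
def RecursiveBound (f : ℤ → ℝ) (K : ℝ) : Prop :=
  ∀ B S : ℝ, (∀ d : ℤ, 2 ≤ |d| → f d ≤ B) →
    tailSum (fun d => ENNReal.ofReal (f d)) ≤ ENNReal.ofReal S → 0 ≤ S → 3 * f 1 + S ≤ 1 →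
      ∀ p : ℕ, 2 ≤ p → ∀ q : ℤ, (p : ℤ) ≤ |q| → f q ≤ K * (f 1 ^ p + B * (3 * f 1 + S))

lemma recursiveBound_of_harmonicBalance {c G : ℝ} {M : ℕ} (hc : 0 < c) (hG : 0 ≤ G)
    {J : ℤ → ℂ} (hJ : ∀ q : ℤ, q ≠ 1 → q ≠ -1 → c ≤ ‖J q‖) {g : (n : ℕ) → (Fin n → ℤ) → ℂ}
    (hg : ∀ n : ℕ, 2 ≤ n → n ≤ M → ∀ v : Fin n → ℤ, ‖g n v‖ ≤ G) {P : ℤ → ℂ}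
    (hbal : ∀ q : ℤ, q ≠ 1 → q ≠ -1 → J q * P q = ∑ n ∈ Finset.Icc 2 M, Sg n (g n) P q)
    (hP1 : ∀ d, ‖P d‖ ≤ ‖P 1‖) :
    RecursiveBound (fun d => ‖P d‖) (G * M ^ 2 * (2 * M + 1) ^ M / c) := by
  intro B S hB hS hS0 hES p hp q hq
  simp only [ofReal_norm] at hS
  have hq₁ : q ≠ 1 := by rintro rfl; norm_num at hq; omega
  have hq₂ : q ≠ -1 := by rintro rfl; norm_num at hq; omega
  have hB0 : 0 ≤ B := (norm_nonneg _).trans (hB 2 (by norm_num))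
  set R := ‖P 1‖ ^ p + B * (3 * ‖P 1‖ + S)
  have hterm (n : ℕ) (hn : n ∈ Finset.Icc 2 M) :
      ‖Sg n (g n) P q‖ ≤ G * (2 * M + 1) ^ M * (M * R) := by
    rw [Finset.mem_Icc] at hn
    refine (norm_Sg_le hn.1 (hg n hn.1 hn.2) hP1 hB hS hS0 hES hq).trans ?_
    have hnM : (n : ℝ) ≤ M := by exact_mod_cast hn.2
    have hn1 : (1 : ℝ) ≤ n := by exact_mod_cast (by omega : 1 ≤ n)
    gcongr G * ?_ * ?_
    · calc ((2 * n + 1 : ℝ)) ^ n ≤ (2 * M + 1) ^ n := by gcongr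
        _ ≤ (2 * M + 1) ^ M := pow_le_pow_right₀ (by linarith) hn.2
    · nlinarith [pow_nonneg (norm_nonneg (P 1)) p,
        mul_nonneg hB0 (by positivity : 0 ≤ 3 * ‖P 1‖ + S)]
  rw [div_mul_eq_mul_div, le_div_iff₀ hc]
  calc ‖P q‖ * c ≤ ‖J q‖ * ‖P q‖ := by
        rw [mul_comm]
        gcongr
        exact hJ q hq₁ hq₂
    _ = ‖∑ n ∈ Finset.Icc 2 M, Sg n (g n) P q‖ := by rw [← norm_mul, hbal q hq₁ hq₂]
    _ ≤ ∑ n ∈ Finset.Icc 2 M, ‖Sg n (g n) P q‖ := norm_sum_le _ _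
    _ ≤ (Finset.Icc 2 M).card • (G * (2 * M + 1) ^ M * (M * R)) :=
        Finset.sum_le_card_nsmul _ _ _ hterm
    _ ≤ M * (G * (2 * M + 1) ^ M * (M * R)) := by
        rw [nsmul_eq_mul]
        gcongr
        simp
    _ = G * M ^ 2 * (2 * M + 1) ^ M * R := by ring

lemma tsum_int_natAbs_le (h : ℕ → ℝ≥0∞) : ∑' d : ℤ, h d.natAbs ≤ 2 * ∑' n, h n := by
  rw [tsum_of_nat_of_neg_add_one ENNReal.summable ENNReal.summable, two_mul]
  refine add_le_add (by simp) ?_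
  calc ∑' n : ℕ, h (-((n : ℤ) + 1)).natAbs = ∑' n : ℕ, h (n + 1) := by congr 1
    _ ≤ ∑' n, h n := ENNReal.tsum_comp_le_tsum_of_injective (add_left_injective 1) h

lemma tsum_ite_lt_inv_sq_le (N : ℕ) :
    ∑' n : ℕ, (if N < n then ENNReal.ofReal ((n : ℝ) ^ 2)⁻¹ else 0) ≤
      ENNReal.ofReal (2 / (N + 1)) := by
  refine ENNReal.tsum_le_of_sum_range_le fun n => ?_
  rw [← Finset.sum_filter, ← ENNReal.ofReal_sum_of_nonneg fun _ _ => by positivity]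
  refine ENNReal.ofReal_le_ofReal ((le_of_eq ?_).trans (sum_Ioo_inv_sq_le N n))
  congr 1
  ext i
  simp only [Finset.mem_filter, Finset.mem_range, Finset.mem_Ioo]
  omega

lemma tailSum_ofReal_le {f : ℤ → ℝ} {A B : ℝ} (hA : 0 ≤ A) (hB0 : 0 ≤ B)
    (hB : ∀ d : ℤ, 2 ≤ |d| → f d ≤ B) (hdecay : ∀ d : ℤ, d ≠ 0 → f d ≤ A / (d : ℝ) ^ 2)
    (N : ℕ) :
    tailSum (fun d => ENNReal.ofReal (f d)) ≤ ENNReal.ofReal (2 * N * B + 4 * A / (N + 1)) := by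
  set h : ℕ → ℝ≥0∞ := fun n => (if n ∈ Finset.Icc 1 N then ENNReal.ofReal B else 0) +
    ENNReal.ofReal A * if N < n then ENNReal.ofReal ((n : ℝ) ^ 2)⁻¹ else 0
  have hpoint (d : ℤ) : (if 2 ≤ |d| then ENNReal.ofReal (f d) else 0) ≤ h d.natAbs := by
    split_ifs with hd
    · simp only [h]
      have hd' : 2 ≤ d.natAbs := by rw [Int.abs_eq_natAbs] at hd; omega
      by_cases hdN : d.natAbs ≤ N
      · rw [if_pos (by rw [Finset.mem_Icc]; omega)]
        exact le_add_right (ENNReal.ofReal_le_ofReal (hB d hd))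
      · rw [if_neg (by rw [Finset.mem_Icc]; omega), if_pos (by omega), zero_add,
          ← ENNReal.ofReal_mul hA]
        refine ENNReal.ofReal_le_ofReal ((hdecay d (by omega)).trans_eq ?_)
        rw [Nat.cast_natAbs, Int.cast_abs, sq_abs, div_eq_mul_inv]
    · exact zero_le
  calc tailSum (fun d => ENNReal.ofReal (f d)) ≤ ∑' d : ℤ, h d.natAbs :=
        ENNReal.tsum_le_tsum hpoint
    _ ≤ 2 * ∑' n, h n := tsum_int_natAbs_le h
    _ ≤ 2 * (N * ENNReal.ofReal B + ENNReal.ofReal A * ENNReal.ofReal (2 / (N + 1))) := by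
        rw [ENNReal.tsum_add, ENNReal.tsum_mul_left,
          tsum_eq_sum (s := Finset.Icc 1 N) fun n hn => if_neg hn, Finset.sum_ite_mem,
          Finset.inter_self, Finset.sum_const, Nat.card_Icc, nsmul_eq_mul]
        gcongr
        · simp
        · exact tsum_ite_lt_inv_sq_le N
    _ = ENNReal.ofReal (2 * N * B + 4 * A / (N + 1)) := by
        rw [← ENNReal.ofReal_natCast, ← ENNReal.ofReal_mul (by positivity),
          ← ENNReal.ofReal_mul hA, ← ENNReal.ofReal_add (by positivity) (by positivity),
          ← ENNReal.ofReal_ofNat 2, ← ENNReal.ofReal_mul (by norm_num)]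
        ring_nf

section Bootstrap

variable {f : ℤ → ℝ} {A K : ℝ}

lemma exists_tail_bound_le_sq (hA : 0 ≤ A) (hK : 0 ≤ K) (hf0 : ∀ d, 0 ≤ f d)
    (hf1 : ∀ d, f d ≤ f 1) (hdecay : ∀ d : ℤ, d ≠ 0 → f d ≤ A / (d : ℝ) ^ 2)
    (hrec : RecursiveBound f K) {N : ℕ}
    (hN : (K + 1) * (3 * f 1 + 2 * N * f 1 + 4 * A / (N + 1)) ≤ 1 / 2) :
    ∃ B, (∀ d : ℤ, 2 ≤ |d| → f d ≤ B) ∧ B ≤ 2 * K * f 1 ^ 2 := by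
  have : Nonempty {d : ℤ // 2 ≤ |d|} := ⟨⟨2, by norm_num⟩⟩
  have hbdd : BddAbove (Set.range fun d : {d : ℤ // 2 ≤ |d|} => f d) :=
    ⟨f 1, by rintro _ ⟨d, rfl⟩; exact hf1 d⟩
  set B := ⨆ d : {d : ℤ // 2 ≤ |d|}, f d
  have hfB (d : ℤ) (hd : 2 ≤ |d|) : f d ≤ B := le_ciSup hbdd ⟨d, hd⟩
  have hB1 : B ≤ f 1 := ciSup_le fun d => hf1 d
  have hB0 : 0 ≤ B := (hf0 2).trans (hfB 2 (by norm_num))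
  set S := 2 * N * B + 4 * A / (N + 1)
  have hS0 : 0 ≤ S := by positivity
  have hSe : S ≤ 2 * N * f 1 + 4 * A / (N + 1) := by
    simp only [S]
    gcongr
  have hKS : K * (3 * f 1 + S) ≤ 1 / 2 := by nlinarith [hf0 1]
  have hES : 3 * f 1 + S ≤ 1 := by nlinarith [hf0 1]
  refine ⟨B, hfB, ?_⟩
  -- by `hKS`, the `B`-term of the recursion is at most `B / 2`, so it can be absorbed
  have hB : B ≤ K * f 1 ^ 2 + B / 2 := ciSup_le fun d =>
    (hrec B S hfB (tailSum_ofReal_le hA hB0 hfB hdecay N) hS0 hES 2 le_rfl d d.2).trans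
      (by nlinarith)
  linarith

lemma le_mul_pow_three (hA : 0 ≤ A) (hK : 0 ≤ K) (hf0 : ∀ d, 0 ≤ f d) (hf1 : ∀ d, f d ≤ f 1)
    (hdecay : ∀ d : ℤ, d ≠ 0 → f d ≤ A / (d : ℝ) ^ 2) (hrec : RecursiveBound f K) {B : ℝ}
    (hfB : ∀ d : ℤ, 2 ≤ |d| → f d ≤ B) (hB : B ≤ 2 * K * f 1 ^ 2)
    (hsmall : (3 + 4 * K + 4 * A) * f 1 ≤ 1) {q : ℤ} (hq : 3 ≤ |q|) :
    f q ≤ K * (1 + 2 * K * (3 + 4 * K + 4 * A)) * f 1 ^ 3 := by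
  rcases (hf0 1).eq_or_lt with he | he
  · simpa [← he] using hf1 q
  set e := f 1
  have hB0 : 0 ≤ B := (hf0 2).trans (hfB 2 (by norm_num))
  -- `N ≈ 1 / e` makes both parts of the tail estimate `O(e)`
  set N := ⌊e⁻¹⌋₊
  set S := 2 * N * B + 4 * A / (N + 1)
  have hS0 : 0 ≤ S := by positivity
  have hN : (N : ℝ) ≤ e⁻¹ := Nat.floor_le (by positivity)
  have hN' : 1 ≤ e * (N + 1) := ((inv_lt_iff_one_lt_mul₀' he).1 (Nat.lt_floor_add_one _)).le
  have hSe : S ≤ (4 * K + 4 * A) * e := by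
    have h₁ : 2 * N * B ≤ 4 * K * e :=
      calc 2 * N * B ≤ 2 * e⁻¹ * (2 * K * e ^ 2) := by gcongr
        _ = 4 * K * e := by field_simp; ring
    have h₂ : 4 * A / (N + 1) ≤ 4 * A * e := by
      rw [div_le_iff₀ (by positivity)]
      nlinarith
    simp only [S]
    linarith
  calc f q ≤ K * (e ^ 3 + B * (3 * e + S)) :=
        hrec B S hfB (tailSum_ofReal_le hA hB0 hfB hdecay N) hS0 (by nlinarith) 3 (by norm_num)
          q hq
    _ ≤ K * (e ^ 3 + 2 * K * e ^ 2 * (3 * e + (4 * K + 4 * A) * e)) := by gcongr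
    _ = K * (1 + 2 * K * (3 + 4 * K + 4 * A)) * e ^ 3 := by ring

theorem exists_forall_le_pow_three_of_recursiveBound (hA : 0 < A) (hK : 0 < K) :
    ∃ ε₀ ∈ Set.Ioo (0 : ℝ) 1, ∃ D : ℝ, 0 < D ∧ ∀ f : ℤ → ℝ, (∀ d, 0 ≤ f d) → (∀ d, f d ≤ f 1) →
      (∀ d : ℤ, d ≠ 0 → f d ≤ A / (d : ℝ) ^ 2) → f 1 ≤ ε₀ → RecursiveBound f K →
        ∀ q : ℤ, 3 ≤ |q| → f q ≤ D * f 1 ^ 3 := by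
  set N := ⌈16 * A * (K + 1)⌉₊
  have hN : (K + 1) * (4 * A / (N + 1)) ≤ 1 / 4 := by
    have := Nat.le_ceil (16 * A * (K + 1))
    rw [mul_div_assoc', div_le_div_iff₀ (by positivity) (by positivity)]
    nlinarith
  refine ⟨min (1 / (4 * (K + 1) * (2 * N + 3))) (1 / (3 + 4 * K + 4 * A)), ⟨by positivity, ?_⟩,
    K * (1 + 2 * K * (3 + 4 * K + 4 * A)), by positivity, ?_⟩
  · exact (min_le_left _ _).trans_lt (by rw [div_lt_one (by positivity)]; nlinarith)
  intro f hf0 hf1 hdecay hε hrec q hq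
  have hε₁ := (le_div_iff₀' (by positivity)).1 (hε.trans (min_le_left _ _))
  have hε₂ := (le_div_iff₀' (by positivity)).1 (hε.trans (min_le_right _ _))
  obtain ⟨B, hfB, hB⟩ := exists_tail_bound_le_sq hA.le hK.le hf0 hf1 hdecay hrec
    (N := N) (by nlinarith)
  exact le_mul_pow_three hA.le hK.le hf0 hf1 hdecay hrec hfB hB hε₂ hq

lemma bddAbove_range_of_le_div_sq (hA : 0 ≤ A)
    (hdecay : ∀ d : ℤ, d ≠ 0 → f d ≤ A / (d : ℝ) ^ 2) : BddAbove (Set.range f) := by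
  refine ⟨max (f 0) A, ?_⟩
  rintro _ ⟨d, rfl⟩
  rcases eq_or_ne d 0 with rfl | hd
  · exact le_max_left _ _
  · have hd1 : (1 : ℝ) ≤ (d : ℝ) ^ 2 := by
      rw [one_le_sq_iff_one_le_abs, ← Int.cast_abs]
      exact_mod_cast Int.one_le_abs hd
    exact (hdecay d hd).trans ((div_le_self hA hd1).trans (le_max_right _ _))

end Bootstrap

theorem stmt12 (a₀ c Gb : ℝ) (ha₀ : 0 < a₀) (hc : 0 < c) (hGb : 0 < Gb)
    (M : ℕ) (hM : 2 ≤ M) :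
    ∃ ε₀ ∈ Set.Ioo (0 : ℝ) 1, ∃ D : ℝ, 0 < D ∧
      ∀ J : ℤ → ℂ, (∀ q : ℤ, q ≠ 1 → q ≠ -1 → c ≤ ‖J q‖) →
      ∀ g : (n : ℕ) → (Fin n → ℤ) → ℂ,
        (∀ n : ℕ, 2 ≤ n → n ≤ M → ∀ v : Fin n → ℤ, ‖g n v‖ ≤ Gb) →
      ∀ P : ℤ → ℂ,
        (∀ q : ℤ, P (-q) = starRingEnd ℂ (P q)) →
        (∀ q : ℤ, q ≠ 0 → ‖P q‖ ≤ a₀ / (q : ℝ) ^ 2) →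
        (⨆ q : ℤ, ‖P q‖) = ‖P 1‖ →
        ‖P 1‖ ≤ ε₀ →
        (∀ q : ℤ, q ≠ 1 → q ≠ -1 → J q * P q = ∑ n ∈ Finset.Icc 2 M, Sg n (g n) P q) →
        ∀ q : ℤ, 3 ≤ |q| → ‖P q‖ ≤ D * ‖P 1‖ ^ 3 := by
  have hM₀ : (0 : ℝ) < M := by exact_mod_cast (by omega : 0 < M)
  obtain ⟨ε₀, hε₀, D, hD, hcubic⟩ := exists_forall_le_pow_three_of_recursiveBound ha₀
    (K := Gb * M ^ 2 * (2 * M + 1) ^ M / c) (by positivity)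
  refine ⟨ε₀, hε₀, D, hD, fun J hJ g hg P _ hdecay hsup hε hbal q hq => ?_⟩
  have hP1 : ∀ d, ‖P d‖ ≤ ‖P 1‖ := hsup ▸ le_ciSup (bddAbove_range_of_le_div_sq ha₀.le hdecay)
  exact hcubic (‖P ·‖) (fun _ => norm_nonneg _) hP1 hdecay hε
    (recursiveBound_of_harmonicBalance hc hGb.le hJ hg hbal hP1) q hq
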